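/- Let N be a symmetric (1+k)×(1+k) real matrix with N₂₂ negative definite and N|N₂₂ := N₁₁ - N₁₂N₂₂⁻¹N₂₁ ≥ 0. Let Γ := { γ ∈ ℝ^k : [1; γ]ᵀ N [1; γ] ≥ 0 }. Then for any fixed vector b ∈ ℝ^k, the supremum of γᵀb over γ ∈ Γ equals -N₁₂N₂₂⁻¹b + sqrt((N|N₂₂) · bᵀ(-N₂₂⁻¹)b). -/

import Mathlib

/-!
With `M = -N₂₂` and `c = -N₂₂⁻¹N₂₁`, completing the square turns the constraint defining `Γ` into
the ellipsoid `(γ - c)ᵀ M (γ - c) ≤ N|N₂₂`. Writing `(γ - c)ᵀ b = (γ - c)ᵀ M (M⁻¹ b)`, the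
Cauchy–Schwarz inequality for the inner product defined by `M` bounds it by
`√((N|N₂₂) · bᵀ M⁻¹ b)`, and the bound is attained on the ray `c + t M⁻¹ b`, `t ≥ 0`.
-/

open Matrix

namespace Matrix

variable {n : Type*} [Fintype n]

theorem IsSymm.dotProduct_mulVec_comm {α : Type*} [CommSemiring α] {A : Matrix n n α}
    (hA : A.IsSymm) (x y : n → α) : x ⬝ᵥ A *ᵥ y = y ⬝ᵥ A *ᵥ x := by
  rw [dotProduct_mulVec, ← mulVec_transpose, hA.eq, dotProduct_comm]

variable [DecidableEq n]

theorem inv_neg {α : Type*} [CommRing α] (A : Matrix n n α) : (-A)⁻¹ = -A⁻¹ := by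
  by_cases hA : IsUnit A.det
  · exact inv_eq_left_inv (by rw [neg_mul_neg, nonsing_inv_mul A hA])
  · have hnegA : ¬IsUnit (-A).det := by
      rwa [det_neg, (isUnit_neg_one.pow _).mul_left_iff]
    rw [nonsing_inv_apply_not_isUnit A hA, nonsing_inv_apply_not_isUnit _ hnegA, neg_zero]

theorem mulVec_nonsing_inv_mulVec {α : Type*} [CommRing α] (A : Matrix n n α)
    (hA : IsUnit A.det) (v : n → α) : A *ᵥ A⁻¹ *ᵥ v = v := by
  rw [mulVec_mulVec, mul_nonsing_inv A hA, one_mulVec]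

theorem IsSymm.add_two_mul_dotProduct_add_dotProduct_mulVec {α : Type*} [CommRing α]
    {A : Matrix n n α} (hA : A.IsSymm) (hdet : IsUnit A.det) (a : α) (v x : n → α) :
    a + 2 * (v ⬝ᵥ x) + x ⬝ᵥ A *ᵥ x =
      (a - v ⬝ᵥ A⁻¹ *ᵥ v) + (x + A⁻¹ *ᵥ v) ⬝ᵥ A *ᵥ (x + A⁻¹ *ᵥ v) := by
  have hAc := A.mulVec_nonsing_inv_mulVec hdet v
  have hcross : A⁻¹ *ᵥ v ⬝ᵥ A *ᵥ x = v ⬝ᵥ x := by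
    rw [hA.dotProduct_mulVec_comm, hAc, dotProduct_comm]
  rw [mulVec_add, dotProduct_add, add_dotProduct, add_dotProduct, hcross, hAc,
    dotProduct_comm x v, dotProduct_comm _ v]
  ring

theorem PosSemidef.dotProduct_mulVec_sq_le {M : Matrix n n ℝ} (hM : M.PosSemidef)
    (x y : n → ℝ) : (x ⬝ᵥ M *ᵥ y) ^ 2 ≤ (x ⬝ᵥ M *ᵥ x) * (y ⬝ᵥ M *ᵥ y) := by
  have hsymm : M.IsSymm := isHermitian_iff_isSymm.mp hM.isHermitian
  have hnonneg : ∀ z, 0 ≤ toBilin' M z z := fun z => by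
    simpa [toBilin'_apply'] using hM.dotProduct_mulVec_nonneg z
  simpa only [toBilin'_apply', hsymm.dotProduct_mulVec_comm y x, ← sq] using
    (toBilin' M).apply_mul_apply_le_of_forall_zero_le hnonneg x y

theorem PosDef.dotProduct_sq_le {M : Matrix n n ℝ} (hM : M.PosDef) (x b : n → ℝ) :
    (x ⬝ᵥ b) ^ 2 ≤ (x ⬝ᵥ M *ᵥ x) * (b ⬝ᵥ M⁻¹ *ᵥ b) := by
  have h := hM.posSemidef.dotProduct_mulVec_sq_le x (M⁻¹ *ᵥ b)
  rwa [M.mulVec_nonsing_inv_mulVec hM.det_pos.ne'.isUnit, dotProduct_comm (M⁻¹ *ᵥ b)] at h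

theorem PosDef.isGreatest_dotProduct_ellipsoid {M : Matrix n n ℝ} (hM : M.PosDef) {s : ℝ}
    (hs : 0 ≤ s) (c b : n → ℝ) :
    IsGreatest ((· ⬝ᵥ b) '' {x | (x - c) ⬝ᵥ M *ᵥ (x - c) ≤ s})
      (c ⬝ᵥ b + √(s * (b ⬝ᵥ M⁻¹ *ᵥ b))) := by
  set q := b ⬝ᵥ M⁻¹ *ᵥ b
  have hq : 0 ≤ q := by simpa using hM.inv.posSemidef.dotProduct_mulVec_nonneg b
  refine ⟨?_, ?_⟩
  · -- The step `√s / √q` is `0` when `q = 0` (as `x / 0 = 0`), and then the centre is optimal.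
    have hMd := M.mulVec_nonsing_inv_mulVec hM.det_pos.ne'.isUnit b
    have hdb : M⁻¹ *ᵥ b ⬝ᵥ b = q := dotProduct_comm _ _
    have htq : √s / √q * q = √(s * q) :=
      calc √s / √q * q = √s * (√q * √q / √q) := by rw [Real.mul_self_sqrt hq]; ring
        _ = √(s * q) := by rw [mul_self_div_self, Real.sqrt_mul hs]
    have htt : √s / √q * √(s * q) ≤ s :=
      calc √s / √q * √(s * q) = √s * √s * (√q / √q) := by rw [Real.sqrt_mul hs]; ring
        _ = s * (√q / √q) := by rw [Real.mul_self_sqrt hs]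
        _ ≤ s := mul_le_of_le_one_right hs (div_self_le_one _)
    refine ⟨c + (√s / √q) • M⁻¹ *ᵥ b, ?_, ?_⟩
    · show (c + (√s / √q) • M⁻¹ *ᵥ b - c) ⬝ᵥ M *ᵥ (c + (√s / √q) • M⁻¹ *ᵥ b - c) ≤ s
      rwa [add_sub_cancel_left, mulVec_smul, hMd, smul_dotProduct, dotProduct_smul, hdb,
        smul_eq_mul, smul_eq_mul, htq]
    · show (c + (√s / √q) • M⁻¹ *ᵥ b) ⬝ᵥ b = _
      rw [add_dotProduct, smul_dotProduct, hdb, smul_eq_mul, htq]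
  · rintro _ ⟨x, hx, rfl⟩
    have hdev : (x - c) ⬝ᵥ b ≤ √(s * q) :=
      (le_abs_self _).trans <| Real.abs_le_sqrt <|
        (hM.dotProduct_sq_le (x - c) b).trans (mul_le_mul_of_nonneg_right hx hq)
    rw [sub_dotProduct] at hdev
    show x ⬝ᵥ b ≤ _
    linarith

end Matrix

/-- Closed form for the supremum of γᵀb over
Γ = {γ | [1;γ]ᵀN[1;γ] ≥ 0}, with N22 negative definite and Schur complement
N|N22 = N11 - N21ᵀN22⁻¹N21 ≥ 0:
sup = -N12N22⁻¹b + √((N|N22)·bᵀ(-N22⁻¹)b). -/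
theorem stmt3 {k : ℕ}
    (N11 : ℝ) (N21 : Fin k → ℝ) (N22 : Matrix (Fin k) (Fin k) ℝ)
    (hN22 : (-N22).PosDef)
    (hschur : 0 ≤ N11 - N21 ⬝ᵥ N22⁻¹.mulVec N21)
    (b : Fin k → ℝ) :
    IsLUB ((fun γ => γ ⬝ᵥ b) ''
        {γ : Fin k → ℝ | 0 ≤ N11 + 2 * (N21 ⬝ᵥ γ) + γ ⬝ᵥ N22.mulVec γ})
      (-(N21 ⬝ᵥ N22⁻¹.mulVec b) +
        Real.sqrt ((N11 - N21 ⬝ᵥ N22⁻¹.mulVec N21) * (b ⬝ᵥ (-N22⁻¹).mulVec b))) := by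
  have hsymm : N22.IsSymm := isSymm_neg_iff.mp (isHermitian_iff_isSymm.mp hN22.isHermitian)
  have hdet : IsUnit N22.det := (isUnit_iff_isUnit_det N22).mp (by simpa using hN22.isUnit.neg)
  set c := -(N22⁻¹ *ᵥ N21)
  have hΓ : {γ | 0 ≤ N11 + 2 * (N21 ⬝ᵥ γ) + γ ⬝ᵥ N22 *ᵥ γ} =
      {γ | (γ - c) ⬝ᵥ (-N22) *ᵥ (γ - c) ≤ N11 - N21 ⬝ᵥ N22⁻¹ *ᵥ N21} := by
    ext γ
    simp only [Set.mem_ofPred_eq, hsymm.add_two_mul_dotProduct_add_dotProduct_mulVec hdet,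
      c, sub_neg_eq_add, neg_mulVec, dotProduct_neg]
    rw [neg_le_iff_add_nonneg, add_comm]
  have hcb : c ⬝ᵥ b = -(N21 ⬝ᵥ N22⁻¹ *ᵥ b) := by
    rw [neg_dotProduct, dotProduct_comm, hsymm.inv.dotProduct_mulVec_comm]
  rw [hΓ, ← hcb, ← Matrix.inv_neg]
  exact (hN22.isGreatest_dotProduct_ellipsoid hschur c b).isLUB
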